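/- Let $Q, B, P_c, \gamma_0, H > 0$ and $r > 0$ be fixed. The function $\phi(p_1) = \frac{Q(p_1 + P_c)}{B \log_2\left(1 + \frac{p_1 \gamma_0}{H^2 + r^2}\right)}$ defined for $p_1 > 0$ is quasiconvex, and if $P_c = 0$ then $\phi$ is strictly increasing on $(0,\infty)$ with $\lim_{p_1 \to 0^+} \phi(p_1) = \frac{Q(H^2 + r^2)\ln 2}{B \gamma_0}$. -/

import Mathlib

/-!
Write `φ p = K (p + P_c) / f p` with `K = Q ln 2 / B` and `f p = ln (1 + c p)`, `c = γ₀ / (H² + r²)`.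
Since `f` is concave and positive on `p > 0`, the sublevel set `{φ ≤ t}` (for `t ≥ 0`) is the
sublevel set `{K (p + P_c) - t f p ≤ 0}` of a convex function. When `P_c = 0`, `φ p / K` is the
reciprocal of the secant slope `f p / p` of the strictly concave `f` through `f 0 = 0`, which is
strictly decreasing and tends to `f' 0 = c` as `p → 0⁺`.
-/

open Real Filter Set Topology

theorem ConvexOn.quasiconvexOn_div_of_concaveOn {E : Type*} [AddCommGroup E] [Module ℝ E]
    {s : Set E} {g h : E → ℝ} (hg : ConvexOn ℝ s g) (hh : ConcaveOn ℝ s h)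
    (hg₀ : ∀ x ∈ s, 0 ≤ g x) (hh₀ : ∀ x ∈ s, 0 < h x) :
    QuasiconvexOn ℝ s (fun x => g x / h x) := by
  intro t
  rcases lt_or_ge t 0 with ht | ht
  · convert convex_empty (𝕜 := ℝ) (E := E)
    refine eq_empty_of_forall_notMem fun x ⟨hx, hxt⟩ => ?_
    exact (div_nonneg (hg₀ x hx) (hh₀ x hx).le).not_gt (hxt.trans_lt ht)
  · have hsub : {x ∈ s | g x / h x ≤ t} = {x ∈ s | (g - t • h) x ≤ 0} := by
      ext x
      simp only [mem_ofPred_eq, Pi.sub_apply, Pi.smul_apply, smul_eq_mul, sub_nonpos,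
        and_congr_right_iff]
      exact fun hx => div_le_iff₀ (hh₀ x hx)
    rw [hsub]
    exact (hg.sub (hh.smul ht)).convex_le 0

theorem strictConcaveOn_log_one_add_mul {c : ℝ} (hc : 0 < c) :
    StrictConcaveOn ℝ (Ici 0) (fun p => log (1 + c * p)) := by
  have himage : (fun p : ℝ => 1 + c • p) '' Ici 0 ⊆ Ioi 0 := by
    rintro _ ⟨p, hp, rfl⟩
    exact add_pos_of_pos_of_nonneg one_pos (mul_nonneg hc.le hp)
  have hlin : ConcaveOn ℝ (Ici 0) (fun p : ℝ => 1 + c • p) :=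
    (concaveOn_const 1 (convex_Ici 0)).add ((concaveOn_id (convex_Ici (0 : ℝ))).smul hc.le)
  exact (strictConcaveOn_log_Ioi.subset himage ((convex_Ici 0).affinity 1 c)).comp_concaveOn hlin
    (strictMonoOn_log.mono himage).monotoneOn
    (fun x _ y _ hxy => mul_left_cancel₀ hc.ne' (add_left_cancel hxy))

theorem StrictConcaveOn.strictMonoOn_self_div {f : ℝ → ℝ} (hf : StrictConcaveOn ℝ (Ici 0) f)
    (hf₀ : f 0 = 0) (hpos : ∀ x, 0 < x → 0 < f x) :
    StrictMonoOn (fun x => x / f x) (Ioi 0) := by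
  intro x (hx : 0 < x) y (hy : 0 < y) hxy
  have hsecant := hf.secant_strict_mono self_mem_Ici hx.le hy.le hx.ne' hy.ne' hxy
  simp only [hf₀, sub_zero] at hsecant
  rw [div_lt_div_iff₀ hy hx] at hsecant
  rw [div_lt_div_iff₀ (hpos x hx) (hpos y hy)]
  linarith

theorem HasDerivAt.tendsto_self_div {f : ℝ → ℝ} {f' : ℝ} (hf : HasDerivAt f f' 0)
    (hf₀ : f 0 = 0) (hf' : f' ≠ 0) :
    Tendsto (fun x => x / f x) (𝓝[≠] 0) (𝓝 f'⁻¹) := by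
  have hslope := hf.tendsto_slope_zero.inv₀ hf'
  simp only [zero_add, hf₀, sub_zero, smul_eq_mul, mul_inv, inv_inv] at hslope
  simpa only [div_eq_mul_inv] using hslope

theorem hasDerivAt_log_one_add_mul_zero (c : ℝ) :
    HasDerivAt (fun p => log (1 + c * p)) c 0 := by
  simpa using (((hasDerivAt_id (0 : ℝ)).const_mul c).const_add 1).log (by simp)

theorem stmt10_general (Q B Pc γ₀ H r : ℝ) (hQ : 0 < Q) (hB : 0 < B) (hPc : 0 ≤ Pc) (hγ : 0 < γ₀)
    (hH : 0 < H)
    (φ : ℝ → ℝ)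
    (hφ : ∀ p₁, φ p₁ = Q * (p₁ + Pc) / (B * Real.logb 2 (1 + p₁ * γ₀ / (H ^ 2 + r ^ 2)))) :
    QuasiconvexOn ℝ (Set.Ioi 0) φ ∧
      (Pc = 0 → StrictMonoOn φ (Set.Ioi 0) ∧
        Tendsto φ (nhdsWithin 0 (Set.Ioi 0))
          (nhds (Q * (H ^ 2 + r ^ 2) * Real.log 2 / (B * γ₀)))) := by
  set S := H ^ 2 + r ^ 2
  have hS : 0 < S := by positivity
  set c := γ₀ / S
  have hc : 0 < c := div_pos hγ hS
  set K := Q * log 2 / B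
  have hK : 0 < K := by positivity
  have hφ_eq : φ = fun p => K * (p + Pc) / log (1 + c * p) := by
    ext p
    rw [hφ, logb, mul_div_assoc p, mul_comm p]
    simp only [K, c]
    field_simp
  have hlog_pos : ∀ p, 0 < p → 0 < log (1 + c * p) := fun p hp =>
    log_pos (lt_add_of_pos_right 1 (mul_pos hc hp))
  have hconc := strictConcaveOn_log_one_add_mul hc
  subst hφ_eq
  refine ⟨?_, fun hPc₀ => ?_⟩
  · refine ConvexOn.quasiconvexOn_div_of_concaveOn ?_
      (hconc.concaveOn.subset Ioi_subset_Ici_self (convex_Ioi 0))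
      (fun p (hp : 0 < p) => by positivity) hlog_pos
    exact ((convexOn_id (convex_Ioi (0 : ℝ))).add_const Pc).smul hK.le
  subst hPc₀
  simp only [add_zero, mul_div_assoc]
  refine ⟨fun x hx y hy hxy => mul_lt_mul_of_pos_left
    (hconc.strictMonoOn_self_div (by simp) hlog_pos hx hy hxy) hK, ?_⟩
  have hlim := ((hasDerivAt_log_one_add_mul_zero c).tendsto_self_div (by simp) hc.ne').mono_left
    (nhdsGT_le_nhdsNE 0)
  convert hlim.const_mul K using 2
  simp only [K, c]
  field_simp

/-- `φ(p₁) = Q(p₁ + P_c)/(B log₂(1 + p₁γ₀/(H² + r²)))` on `p₁ > 0` is quasiconvex, and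
if `P_c = 0` then `φ` is strictly increasing on `(0,∞)` with
`lim_{p₁→0⁺} φ(p₁) = Q(H² + r²) ln 2 / (B γ₀)`. -/
theorem stmt10 (Q B Pc γ₀ H r : ℝ) (hQ : 0 < Q) (hB : 0 < B) (hPc : 0 ≤ Pc) (hγ : 0 < γ₀)
    (hH : 0 < H) (hr : 0 < r)
    (φ : ℝ → ℝ)
    (hφ : ∀ p₁, φ p₁ = Q * (p₁ + Pc) / (B * Real.logb 2 (1 + p₁ * γ₀ / (H ^ 2 + r ^ 2)))) :
    QuasiconvexOn ℝ (Set.Ioi 0) φ ∧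
      (Pc = 0 → StrictMonoOn φ (Set.Ioi 0) ∧
        Tendsto φ (nhdsWithin 0 (Set.Ioi 0))
          (nhds (Q * (H ^ 2 + r ^ 2) * Real.log 2 / (B * γ₀)))) :=
  stmt10_general Q B Pc γ₀ H r hQ hB hPc hγ hH φ hφ
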